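/- Let e₁, e₂, e₃ denote the standard basis of (ZMod 2)³. There exists a (unique) group homomorphism φ : W → (ZMod 2)³ with φ(s₁) = e₁, φ(s₂) = e₂, φ(s₃) = e₃ and φ(s₄) = e₁ + e₂ + e₃; this φ is surjective, and its kernel is isomorphic to ℤ × ℤ. -/

import Mathlib

/-- The Coxeter matrix of the 4-cycle: off-diagonal entries are `2` for cyclically adjacent
indices and `0` (i.e. `∞`) for the two opposite pairs. -/
def C4 : CoxeterMatrix (Fin 4) where
  M := Matrix.of fun i j : Fin 4 ↦
    if i = j then 1
    else if (i.val + 1) % 4 = j.val ∨ (j.val + 1) % 4 = i.val then 2 else 0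
  off_diagonal := by
    intro i i' h
    fin_cases i <;> fin_cases i' <;> simp_all [Matrix.of_apply]

/-- `W`, the right-angled Coxeter group of the 4-cycle. -/
abbrev W : Type := C4.Group

/-- The simple reflections `s₁, s₂, s₃, s₄` of `W`, indexed by `Fin 4`
(so `s 0 = s₁`, `s 1 = s₂`, `s 2 = s₃`, `s 3 = s₄`). -/
def s (i : Fin 4) : W := C4.simple i

/-- The standard basis vectors `e₁, e₂, e₃` of `(ZMod 2)³`. -/
def e1 : ZMod 2 × ZMod 2 × ZMod 2 := (1, 0, 0)
def e2 : ZMod 2 × ZMod 2 × ZMod 2 := (0, 1, 0)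
def e3 : ZMod 2 × ZMod 2 × ZMod 2 := (0, 0, 1)

/-!
Opposite generators of the 4-cycle generate infinite dihedral groups and adjacent ones commute,
so `W ≅ D∞ × D∞` with `s₁, s₃` generating the first factor and `s₂, s₄` the second. Writing an
element of `D∞` as `r^k` or `sr₀ r^k`, the map `φ` sends a pair with rotation exponents `k, l` to
`(k + l)(e₁ + e₃)`, plus `e₁` if the first entry is a reflection and `e₂` if the second one is.
Hence `ker φ = {(r^k, r^l) : k ≡ l mod 2}`, which is free abelian on `(r, r)` and `(r, r⁻¹)`.
-/

open DihedralGroup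

local notation "D∞" => DihedralGroup 0

theorem semiconjBy_mul_zpow_of_mul_self_eq_one {G : Type*} [Group G] {a b : G}
    (ha : a * a = 1) (hb : b * b = 1) (k : ℤ) :
    SemiconjBy a ((a * b) ^ k) ((a * b) ^ (-k)) := by
  have h : SemiconjBy a (a * b) (a * b)⁻¹ := by
    rw [SemiconjBy, mul_inv_rev, inv_eq_of_mul_eq_one_right hb, ← mul_assoc, ha, one_mul,
      mul_assoc, inv_mul_cancel, mul_one]
  simpa only [inv_zpow'] using h.zpow_right k

namespace DihedralGroup

variable {G : Type*} [Group G] {a b : G}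

/-- `D∞` is the free product of the two involutions `sr 0` and `sr 1`; the formula is forced by
`r i = (sr 0 * sr 1) ^ i` and `sr i = sr 0 * r i`. -/
def liftInfinite (a b : G) (ha : a * a = 1) (hb : b * b = 1) : D∞ →* G where
  toFun
    | r (i : ℤ) => (a * b) ^ i
    | sr (i : ℤ) => a * (a * b) ^ i
  map_one' := zpow_zero _
  map_mul' := by
    have conj (k : ℤ) := (semiconjBy_mul_zpow_of_mul_self_eq_one ha hb k).eq
    rintro (⟨i : ℤ⟩ | ⟨i : ℤ⟩) (⟨j : ℤ⟩ | ⟨j : ℤ⟩)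
    · exact zpow_add _ _ _
    · show a * (a * b) ^ (j - i) = (a * b) ^ i * (a * (a * b) ^ j)
      rw [← mul_assoc, ← neg_neg i, ← conj, mul_assoc, ← zpow_add, neg_neg, neg_add_eq_sub]
    · exact (congrArg _ (zpow_add _ _ _)).trans (mul_assoc _ _ _).symm
    · show (a * b) ^ (j - i) = a * (a * b) ^ i * (a * (a * b) ^ j)
      rw [conj, mul_assoc, ← mul_assoc a, ha, one_mul, ← zpow_add, neg_add_eq_sub]

@[simp] theorem liftInfinite_sr_zero (ha : a * a = 1) (hb : b * b = 1) :
    liftInfinite a b ha hb (sr 0) = a :=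
  (congrArg _ (zpow_zero _)).trans (mul_one a)

@[simp] theorem liftInfinite_sr_one (ha : a * a = 1) (hb : b * b = 1) :
    liftInfinite a b ha hb (sr 1) = b := by
  show a * (a * b) ^ (1 : ℤ) = b
  rw [zpow_one, ← mul_assoc, ha, one_mul]

theorem commute_liftInfinite {c : G} (ha : a * a = 1) (hb : b * b = 1) (hac : Commute a c)
    (hbc : Commute b c) (x : D∞) : Commute (liftInfinite a b ha hb x) c := by
  rcases x with ⟨i : ℤ⟩ | ⟨i : ℤ⟩
  · exact (hac.mul_left hbc).zpow_left i
  · exact hac.mul_left ((hac.mul_left hbc).zpow_left i)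

theorem commute_liftInfinite_liftInfinite {c d : G} (ha : a * a = 1) (hb : b * b = 1)
    (hc : c * c = 1) (hd : d * d = 1) (hac : Commute a c) (had : Commute a d)
    (hbc : Commute b c) (hbd : Commute b d) (x y : D∞) :
    Commute (liftInfinite a b ha hb x) (liftInfinite c d hc hd y) :=
  (commute_liftInfinite hc hd (commute_liftInfinite ha hb hac hbc x).symm
    (commute_liftInfinite ha hb had hbd x).symm y).symm

theorem eq_r_one_zpow_or_eq_sr_zero_mul (x : D∞) :
    (∃ k : ℤ, x = r 1 ^ k) ∨ ∃ k : ℤ, x = sr 0 * r 1 ^ k := by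
  rcases x with ⟨i : ℤ⟩ | ⟨i : ℤ⟩
  · exact .inl ⟨i, (r_one_zpow i).symm⟩
  · exact .inr ⟨i, by rw [r_one_zpow, sr_mul_r, zero_add]; rfl⟩

theorem r_one_zpow_eq_one_iff {k : ℤ} : (r 1 : D∞) ^ k = 1 ↔ k = 0 := by
  rw [← orderOf_dvd_iff_zpow_eq_one, orderOf_r_one, Nat.cast_zero, zero_dvd_iff]

theorem r_one_eq_sr_zero_mul_sr_one : (r 1 : D∞) = sr 0 * sr 1 := by
  rw [sr_mul_sr, sub_zero]

@[simp] theorem liftInfinite_r_one (ha : a * a = 1) (hb : b * b = 1) :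
    liftInfinite a b ha hb (r 1) = a * b := by
  rw [r_one_eq_sr_zero_mul_sr_one, map_mul, liftInfinite_sr_zero, liftInfinite_sr_one]

theorem hom_ext_infinite {f g : D∞ →* G} (h₀ : f (sr 0) = g (sr 0))
    (h₁ : f (sr 1) = g (sr 1)) : f = g := by
  have hr : f (r 1) = g (r 1) := by rw [r_one_eq_sr_zero_mul_sr_one, map_mul, map_mul, h₀, h₁]
  ext x
  rcases eq_r_one_zpow_or_eq_sr_zero_mul x with ⟨k, rfl⟩ | ⟨k, rfl⟩ <;>
    simp only [map_mul, map_zpow, h₀, hr]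

end DihedralGroup

theorem CoxeterSystem.commute_simple_of_eq_two {B W : Type*} [Group W] {M : CoxeterMatrix B}
    (cs : CoxeterSystem M W) {i j : B} (h : M i j = 2) : Commute (cs.simple i) (cs.simple j) := by
  have hsq := cs.simple_mul_simple_pow i j
  rw [h, pow_two] at hsq
  rw [Commute, SemiconjBy, eq_inv_of_mul_eq_one_left hsq, mul_inv_rev, cs.inv_simple,
    cs.inv_simple]

theorem W.hom_ext {M : Type*} [Monoid M] {f g : W →* M} (h : ∀ i, f (s i) = g (s i)) :
    f = g :=
  C4.toCoxeterSystem.ext_simple h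

theorem s_mul_self (i : Fin 4) : s i * s i = 1 := C4.toCoxeterSystem.simple_mul_simple_self i

theorem commute_s {i j : Fin 4} (h : C4 i j = 2) : Commute (s i) (s j) :=
  C4.toCoxeterSystem.commute_simple_of_eq_two h

def dihedralPairs : Fin 4 → D∞ × D∞ := ![(sr 0, 1), (1, sr 0), (sr 1, 1), (1, sr 1)]

theorem isLiftable_dihedralPairs : C4.IsLiftable dihedralPairs := by
  intro i j
  fin_cases i <;> fin_cases j <;> decide

def toDihedralProd : W →* D∞ × D∞ := C4.toCoxeterSystem.lift ⟨_, isLiftable_dihedralPairs⟩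

@[simp] theorem toDihedralProd_s (i : Fin 4) : toDihedralProd (s i) = dihedralPairs i :=
  C4.toCoxeterSystem.lift_apply_simple isLiftable_dihedralPairs i

def ofDihedralProd : D∞ × D∞ →* W :=
  (liftInfinite (s 0) (s 2) (s_mul_self 0) (s_mul_self 2)).noncommCoprod
    (liftInfinite (s 1) (s 3) (s_mul_self 1) (s_mul_self 3))
    (commute_liftInfinite_liftInfinite _ _ _ _ (commute_s rfl) (commute_s rfl) (commute_s rfl)
      (commute_s rfl))

theorem ofDihedralProd_comp_toDihedralProd :
    ofDihedralProd.comp toDihedralProd = MonoidHom.id W :=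
  W.hom_ext fun i ↦ by fin_cases i <;> simp [ofDihedralProd, dihedralPairs]

theorem toDihedralProd_comp_ofDihedralProd :
    toDihedralProd.comp ofDihedralProd = MonoidHom.id (D∞ × D∞) := by
  have h₁ : toDihedralProd.comp (liftInfinite (s 0) (s 2) (s_mul_self 0) (s_mul_self 2)) =
      MonoidHom.inl _ _ := hom_ext_infinite (by simp [dihedralPairs]) (by simp [dihedralPairs])
  have h₂ : toDihedralProd.comp (liftInfinite (s 1) (s 3) (s_mul_self 1) (s_mul_self 3)) =
      MonoidHom.inr _ _ := hom_ext_infinite (by simp [dihedralPairs]) (by simp [dihedralPairs])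
  rw [ofDihedralProd, MonoidHom.comp_noncommCoprod]
  simp only [h₁, h₂, MonoidHom.noncommCoprod_inl_inr]

def equivDihedralProd : W ≃* D∞ × D∞ :=
  MonoidHom.toMulEquiv _ _ ofDihedralProd_comp_toDihedralProd toDihedralProd_comp_ofDihedralProd

local notation "𝔽₂³" => ZMod 2 × ZMod 2 × ZMod 2

theorem CharTwo.ofAdd_mul_self {R : Type*} [Ring R] [CharP R 2] (v : R) :
    Multiplicative.ofAdd v * Multiplicative.ofAdd v = 1 := by
  rw [← ofAdd_add, CharTwo.add_self_eq_zero, ofAdd_zero]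

theorem surjective_of_ofAdd_e_mem_range {G : Type*} [Group G] (f : G →* Multiplicative 𝔽₂³)
    (h₁ : .ofAdd e1 ∈ f.range) (h₂ : .ofAdd e2 ∈ f.range) (h₃ : .ofAdd e3 ∈ f.range) :
    Function.Surjective f := by
  rw [← MonoidHom.range_eq_top, eq_top_iff]
  rintro x -
  have hdecomp : ∀ v : 𝔽₂³, Multiplicative.ofAdd v =
      .ofAdd e1 ^ v.1.val * .ofAdd e2 ^ v.2.1.val * .ofAdd e3 ^ v.2.2.val := by decide
  rw [← ofAdd_toAdd x, hdecomp]
  exact mul_mem (mul_mem (pow_mem h₁ _) (pow_mem h₂ _)) (pow_mem h₃ _)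

def dihedralProdChar : D∞ × D∞ →* Multiplicative 𝔽₂³ :=
  (liftInfinite (.ofAdd e1) (.ofAdd e3) (CharTwo.ofAdd_mul_self _)
      (CharTwo.ofAdd_mul_self _)).coprod
    (liftInfinite (.ofAdd e2) (.ofAdd (e1 + e2 + e3)) (CharTwo.ofAdd_mul_self _)
      (CharTwo.ofAdd_mul_self _))

def charMap : W →* Multiplicative 𝔽₂³ := dihedralProdChar.comp (equivDihedralProd : W →* D∞ × D∞)

theorem charMap_s : charMap (s 0) = .ofAdd e1 ∧ charMap (s 1) = .ofAdd e2 ∧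
    charMap (s 2) = .ofAdd e3 ∧ charMap (s 3) = .ofAdd (e1 + e2 + e3) := by
  simp [charMap, equivDihedralProd, dihedralProdChar, dihedralPairs]

theorem e2_add_e1_add_e2_add_e3 : e2 + (e1 + e2 + e3) = e1 + e3 := by decide

theorem dihedralProdChar_apply (k l : ℤ) :
    dihedralProdChar (r 1 ^ k, r 1 ^ l) = .ofAdd ((k + l) • (e1 + e3)) ∧
    dihedralProdChar (sr 0 * r 1 ^ k, r 1 ^ l) = .ofAdd (e1 + (k + l) • (e1 + e3)) ∧
    dihedralProdChar (r 1 ^ k, sr 0 * r 1 ^ l) = .ofAdd (e2 + (k + l) • (e1 + e3)) ∧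
    dihedralProdChar (sr 0 * r 1 ^ k, sr 0 * r 1 ^ l) =
      .ofAdd (e1 + e2 + (k + l) • (e1 + e3)) := by
  simp only [dihedralProdChar, MonoidHom.coprod_apply, map_mul, map_zpow, liftInfinite_r_one,
    liftInfinite_sr_zero, ← ofAdd_add, ← ofAdd_zsmul, e2_add_e1_add_e2_add_e3, add_zsmul]
  refine ⟨trivial, ?_, ?_, ?_⟩ <;> congr 1 <;> abel

theorem zsmul_e1_add_e3_eq_zero_iff (n : ℤ) : n • (e1 + e3) = 0 ↔ Even n := by
  rw [← Int.cast_smul_eq_zsmul (ZMod 2), ← ZMod.intCast_eq_zero_iff_even]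
  generalize (n : ZMod 2) = a
  revert a
  decide

theorem add_zsmul_e1_add_e3_ne_zero {c : 𝔽₂³} (hc : c = e1 ∨ c = e2 ∨ c = e1 + e2) (n : ℤ) :
    c + n • (e1 + e3) ≠ 0 := by
  rw [← Int.cast_smul_eq_zsmul (ZMod 2)]
  generalize (n : ZMod 2) = a
  revert a
  rcases hc with rfl | rfl | rfl <;> decide

def rotationPairs : Multiplicative (ℤ × ℤ) →* D∞ × D∞ where
  toFun p := (r 1 ^ (p.toAdd.1 + p.toAdd.2), r 1 ^ (p.toAdd.1 - p.toAdd.2))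
  map_one' := rfl
  map_mul' p q := by
    simp only [toAdd_mul, Prod.fst_add, Prod.snd_add, Prod.mk_mul_mk, ← zpow_add]
    congr 2 <;> ring

theorem rotationPairs_apply (p : Multiplicative (ℤ × ℤ)) :
    rotationPairs p = (r 1 ^ (p.toAdd.1 + p.toAdd.2), r 1 ^ (p.toAdd.1 - p.toAdd.2)) :=
  rfl

theorem rotationPairs_injective : Function.Injective rotationPairs := by
  rw [injective_iff_map_eq_one]
  intro p hp
  rw [rotationPairs_apply, Prod.mk_eq_one, r_one_zpow_eq_one_iff, r_one_zpow_eq_one_iff] at hp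
  rw [← toAdd_eq_zero]
  ext <;> simp only [Prod.fst_zero, Prod.snd_zero] <;> omega

theorem ker_dihedralProdChar : dihedralProdChar.ker = rotationPairs.range := by
  ext ⟨x, y⟩
  rw [MonoidHom.mem_ker, MonoidHom.mem_range]
  constructor
  · intro h
    rcases eq_r_one_zpow_or_eq_sr_zero_mul x with ⟨k, rfl⟩ | ⟨k, rfl⟩ <;>
      rcases eq_r_one_zpow_or_eq_sr_zero_mul y with ⟨l, rfl⟩ | ⟨l, rfl⟩ <;>
      simp only [dihedralProdChar_apply, ofAdd_eq_one] at h
    · obtain ⟨m, hm⟩ := (zsmul_e1_add_e3_eq_zero_iff _).mp h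
      refine ⟨.ofAdd (m, k - m), ?_⟩
      rw [rotationPairs_apply, toAdd_ofAdd]
      congr 2 <;> omega
    all_goals exact absurd h (add_zsmul_e1_add_e3_ne_zero (by simp) _)
  · rintro ⟨p, hp⟩
    rw [← hp, rotationPairs_apply, (dihedralProdChar_apply _ _).1, ofAdd_eq_one,
      zsmul_e1_add_e3_eq_zero_iff]
    exact ⟨p.toAdd.1, by ring⟩

theorem nonempty_ker_charMap_mulEquiv : Nonempty (charMap.ker ≃* Multiplicative (ℤ × ℤ)) := by
  rw [charMap, MonoidHom.ker_comp_mulEquiv, ker_dihedralProdChar]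
  exact ⟨(equivDihedralProd.symm.subgroupMap _).symm.trans
    (MonoidHom.ofInjective rotationPairs_injective).symm⟩

theorem charMap_surjective : Function.Surjective charMap :=
  surjective_of_ofAdd_e_mem_range charMap ⟨s 0, charMap_s.1⟩ ⟨s 1, charMap_s.2.1⟩
    ⟨s 2, charMap_s.2.2.1⟩

/-- There is a unique group homomorphism `φ : W → (ZMod 2)³` with `φ(s₁) = e₁`,
`φ(s₂) = e₂`, `φ(s₃) = e₃`, `φ(s₄) = e₁ + e₂ + e₃`; it is surjective and its kernel is
isomorphic to `ℤ × ℤ`. -/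
theorem stmt7 :
    (∃! φ : W →* Multiplicative (ZMod 2 × ZMod 2 × ZMod 2),
      φ (s 0) = Multiplicative.ofAdd e1 ∧ φ (s 1) = Multiplicative.ofAdd e2 ∧
      φ (s 2) = Multiplicative.ofAdd e3 ∧ φ (s 3) = Multiplicative.ofAdd (e1 + e2 + e3)) ∧
    ∀ φ : W →* Multiplicative (ZMod 2 × ZMod 2 × ZMod 2),
      (φ (s 0) = Multiplicative.ofAdd e1 ∧ φ (s 1) = Multiplicative.ofAdd e2 ∧
       φ (s 2) = Multiplicative.ofAdd e3 ∧ φ (s 3) = Multiplicative.ofAdd (e1 + e2 + e3)) →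
      Function.Surjective φ ∧ Nonempty (φ.ker ≃* Multiplicative (ℤ × ℤ)) := by
  have eq_charMap : ∀ φ : W →* Multiplicative 𝔽₂³,
      (φ (s 0) = .ofAdd e1 ∧ φ (s 1) = .ofAdd e2 ∧
        φ (s 2) = .ofAdd e3 ∧ φ (s 3) = .ofAdd (e1 + e2 + e3)) → φ = charMap := by
    rintro φ ⟨h₀, h₁, h₂, h₃⟩
    obtain ⟨c₀, c₁, c₂, c₃⟩ := charMap_s
    refine W.hom_ext fun i ↦ ?_
    fin_cases i
    exacts [h₀.trans c₀.symm, h₁.trans c₁.symm, h₂.trans c₂.symm, h₃.trans c₃.symm]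
  refine ⟨⟨charMap, charMap_s, eq_charMap⟩, fun φ hφ ↦ ?_⟩
  obtain rfl := eq_charMap φ hφ
  exact ⟨charMap_surjective, nonempty_ker_charMap_mulEquiv⟩
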